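/- Let p, q, r be real numbers with s = p+q+r and let M be the 4×4 real symmetric matrix [[1,p,q,r],[p,1,(s−1)/2,(s−1)/2],[q,(s−1)/2,1,(s−1)/2],[r,(s−1)/2,(s−1)/2,1]]. If M is positive semidefinite and q ≤ 0, then p ≥ −√3/2. -/

import Mathlib

/-!
Testing positive semidefiniteness against `u = (√3/2, 1, 1/2, 0)` and `v = (-√3/2, 0, 1/2, 1)`
gives `Q(u) ≥ 0` and `Q(v) ≥ 0` for the quadratic form `Q` of `M`. The weights are chosen so that
`(2√3 - 1) Q(u) + Q(v) = 3 (2p + q + √3)`: the terms in `r` and in `s` cancel. Hence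
`2p + q + √3 ≥ 0`, and `q ≤ 0` gives `p ≥ -√3/2`.
-/

open Matrix

noncomputable def edgeMatrix (p q r : ℝ) : Matrix (Fin 4) (Fin 4) ℝ :=
  !![1, p, q, r;
    p, 1, (p + q + r - 1) / 2, (p + q + r - 1) / 2;
    q, (p + q + r - 1) / 2, 1, (p + q + r - 1) / 2;
    r, (p + q + r - 1) / 2, (p + q + r - 1) / 2, 1]

theorem edgeMatrix_quadForm (p q r : ℝ) (x : Fin 4 → ℝ) :
    x ⬝ᵥ edgeMatrix p q r *ᵥ x =
      x 0 ^ 2 + x 1 ^ 2 + x 2 ^ 2 + x 3 ^ 2 + 2 * (p * x 0 * x 1 + q * x 0 * x 2 + r * x 0 * x 3)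
        + (p + q + r - 1) * (x 1 * x 2 + x 1 * x 3 + x 2 * x 3) := by
  simp only [dotProduct, mulVec, edgeMatrix, of_apply, cons_val', cons_val_fin_one, Fin.sum_univ_four,
    Fin.isValue, cons_val_zero, cons_val_one, cons_val, one_mul]
  ring

theorem two_mul_add_add_sqrt_three_nonneg_of_posSemidef {p q r : ℝ}
    (hM : (edgeMatrix p q r).PosSemidef) : 0 ≤ 2 * p + q + √3 := by
  have hu := hM.dotProduct_mulVec_nonneg ![√3 / 2, 1, 1 / 2, 0]
  have hv := hM.dotProduct_mulVec_nonneg ![-√3 / 2, 0, 1 / 2, 1]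
  rw [star_trivial, edgeMatrix_quadForm] at hu hv
  simp only [cons_val_zero, cons_val_one, cons_val] at hu hv
  have hsq : √3 ^ 2 = 3 := Real.sq_sqrt (by norm_num)
  have hweight : 0 ≤ 2 * √3 - 1 := by nlinarith [Real.sqrt_nonneg 3]
  linear_combination
    (1 / 3) * mul_nonneg hweight hu + (1 / 3) * hv + (√3 / 6 + (2 * p + q) / 3) * hsq

theorem triangle_psd_large_edge (p q r : ℝ)
    (hM : (!![1, p, q, r;
        p, 1, (p + q + r - 1) / 2, (p + q + r - 1) / 2;
        q, (p + q + r - 1) / 2, 1, (p + q + r - 1) / 2;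
        r, (p + q + r - 1) / 2, (p + q + r - 1) / 2, 1] :
        Matrix (Fin 4) (Fin 4) ℝ).PosSemidef)
    (hq : q ≤ 0) :
    -(Real.sqrt 3) / 2 ≤ p := by
  linarith [two_mul_add_add_sqrt_three_nonneg_of_posSemidef (r := r) hM]
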